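/- Let U ~ χ²_{n_a} and V ~ χ²_{n_b} be independent. For a, b > 0, define the event T = {V ≤ n_b + 2√(n_b b) + 2b, U > n_a − 2√(n_a a)}. Then P(Tᶜ) ≤ exp(−a) + exp(−b), and on T the ratio (U/n_a)/(V/n_b) is at least (1 − 2√(a/n_a))/(1 + 2√(b/n_b) + 2b/n_b). -/

import Mathlib

/-! The moment generating function of `χ²_n` is `(1 - 2t)^(-n/2)`, so the Chernoff bound at
`t = (1 - 1/r)/2` gives `P(Y ≥ n r) ≤ (√r e^((1-r)/2))^n` for `r ≥ 1`, and the same bound on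
`P(Y ≤ n r)` for `0 < r ≤ 1`. With `u = √(x/n)`, the choices `r = 1 + 2u + 2u²` and `r = 1 - 2u`
together with `1 + 2u + 2u² ≤ e^(2u)` and `1 - v ≤ e^(-v - v²/2)` bound the base by `e^(-u²)`,
which yields the Laurent–Massart tails `e^(-x)`. A union bound over the two tails controls `Tᶜ`;
on `T`, since `V > 0` almost surely, the ratio bound is monotonicity of division. -/

open MeasureTheory ProbabilityTheory Matrix
open scoped ENNReal NNReal BigOperators

/-- The standard Gaussian measure on `Fin n → ℝ` (iid `N(0,1)` coordinates). -/
noncomputable def stdGaussianPi (n : ℕ) : Measure (Fin n → ℝ) :=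
  Measure.pi fun _ => gaussianReal 0 1

/-- The chi-squared distribution with `d` degrees of freedom, i.e. the law of the
sum of squares of `d` independent standard Gaussians. -/
noncomputable def chiSq (d : ℕ) : Measure ℝ :=
  (stdGaussianPi d).map fun x => ∑ i, (x i) ^ 2

/-- The centered Gaussian measure on `ℝⁿ` with covariance matrix `S`, realized as the
pushforward of the standard Gaussian under multiplication by `S^{1/2}`. -/
noncomputable def gaussianVec {n : ℕ} (S : Matrix (Fin n) (Fin n) ℝ) (hS : S.PosSemidef) :
    Measure (Fin n → ℝ) :=
  (stdGaussianPi n).map fun x => ((hS.1.eigenvectorUnitary : Matrix (Fin n) (Fin n) ℝ) *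
    diagonal (Real.sqrt ∘ hS.1.eigenvalues) *
    (star hS.1.eigenvectorUnitary : Matrix (Fin n) (Fin n) ℝ)).mulVec x

open Real

lemma gaussianPDFReal_mul_exp_mul_sq (t x : ℝ) :
    gaussianPDFReal 0 1 x * exp (t * x ^ 2) = (√(2 * π))⁻¹ * exp (-(1 / 2 - t) * x ^ 2) := by
  simp only [gaussianPDFReal_def, NNReal.coe_one, mul_one, sub_zero, mul_assoc, ← exp_add]
  ring_nf

lemma integrable_exp_mul_sq_gaussianReal {t : ℝ} (ht : t < 1 / 2) :
    Integrable (fun x => exp (t * x ^ 2)) (gaussianReal 0 1) := by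
  rw [gaussianReal_of_var_ne_zero _ one_ne_zero, integrable_withDensity_iff_integrable_smul'
    (measurable_gaussianPDF 0 1) (ae_of_all _ fun _ => gaussianPDF_lt_top)]
  simp only [toReal_gaussianPDF, smul_eq_mul, gaussianPDFReal_mul_exp_mul_sq]
  exact (integrable_exp_neg_mul_sq (by linarith)).const_mul _

-- For `t ≥ 1/2` both sides are the junk value `0`.
lemma integral_exp_mul_sq_gaussianReal (t : ℝ) :
    ∫ x, exp (t * x ^ 2) ∂gaussianReal 0 1 = (√(1 - 2 * t))⁻¹ := by
  simp only [integral_gaussianReal_eq_integral_smul one_ne_zero, smul_eq_mul,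
    gaussianPDFReal_mul_exp_mul_sq]
  rw [integral_const_mul, integral_gaussian, ← sqrt_inv, ← sqrt_inv, ← sqrt_mul (by positivity)]
  congr 1
  field_simp

lemma measurable_sum_sq (n : ℕ) : Measurable fun x : Fin n → ℝ => ∑ i, x i ^ 2 := by
  fun_prop

instance isProbabilityMeasure_stdGaussianPi (n : ℕ) : IsProbabilityMeasure (stdGaussianPi n) :=
  inferInstanceAs (IsProbabilityMeasure (Measure.pi _))

instance isProbabilityMeasure_chiSq (n : ℕ) : IsProbabilityMeasure (chiSq n) :=
  Measure.isProbabilityMeasure_map (measurable_sum_sq n).aemeasurable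

lemma exp_mul_sum_sq (n : ℕ) (t : ℝ) (x : Fin n → ℝ) :
    exp (t * ∑ i, x i ^ 2) = ∏ i, exp (t * x i ^ 2) := by
  rw [Finset.mul_sum, exp_sum]

lemma integrable_exp_mul_chiSq (n : ℕ) {t : ℝ} (ht : t < 1 / 2) :
    Integrable (fun y => exp (t * y)) (chiSq n) := by
  rw [chiSq, integrable_map_measure (by fun_prop) (measurable_sum_sq n).aemeasurable]
  simp only [Function.comp_def, exp_mul_sum_sq]
  exact Integrable.fintype_prod fun _ => integrable_exp_mul_sq_gaussianReal ht

lemma mgf_chiSq (n : ℕ) (t : ℝ) :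
    mgf id (chiSq n) t = (√(1 - 2 * t))⁻¹ ^ n := by
  rw [chiSq, mgf_id_map (measurable_sum_sq n).aemeasurable, mgf]
  simp only [exp_mul_sum_sq]
  rw [stdGaussianPi, integral_fintype_prod_eq_pow (fun x => exp (t * x ^ 2)),
    integral_exp_mul_sq_gaussianReal t, Fintype.card_fin]

lemma ae_pos_chiSq {n : ℕ} (hn : 0 < n) : ∀ᵐ y ∂chiSq n, 0 < y := by
  have := nullSingletonClass_gaussianReal (μ := 0) one_ne_zero
  have : Nonempty (Fin n) := ⟨⟨0, hn⟩⟩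
  rw [chiSq, stdGaussianPi, ae_map_iff (measurable_sum_sq n).aemeasurable measurableSet_Ioi]
  filter_upwards [Measure.ae_ne _ 0] with x hx
  obtain ⟨i, hi⟩ := Function.ne_iff.mp hx
  exact Finset.sum_pos' (fun i _ => sq_nonneg (x i))
    ⟨i, Finset.mem_univ i, pow_two_pos_of_ne_zero hi⟩

lemma exp_mul_mgf_chiSq (n : ℕ) {r : ℝ} (hr : 0 < r) :
    exp (-((1 - r⁻¹) / 2) * (n * r)) * mgf id (chiSq n) ((1 - r⁻¹) / 2) =
      (√r * exp ((1 - r) / 2)) ^ n := by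
  rw [mgf_chiSq, show 1 - 2 * ((1 - r⁻¹) / 2) = r⁻¹ by ring, sqrt_inv, inv_inv, mul_pow,
    ← exp_nat_mul, mul_comm]
  congr 2
  field_simp
  ring

lemma measureReal_chiSq_Ici_le_pow (n : ℕ) {r : ℝ} (hr : 1 ≤ r) :
    (chiSq n).real (Set.Ici (n * r)) ≤ (√r * exp ((1 - r) / 2)) ^ n := by
  have ht : 0 ≤ (1 - r⁻¹) / 2 := by
    have := inv_le_one_of_one_le₀ hr
    linarith
  have hr_inv : 0 < r⁻¹ := inv_pos.mpr (by linarith)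
  exact (measure_ge_le_exp_mul_mgf (X := id) _ ht
    (integrable_exp_mul_chiSq n (by linarith))).trans_eq (exp_mul_mgf_chiSq n (by linarith))

lemma measureReal_chiSq_Iic_le_pow (n : ℕ) {r : ℝ} (hr₀ : 0 < r) (hr : r ≤ 1) :
    (chiSq n).real (Set.Iic (n * r)) ≤ (√r * exp ((1 - r) / 2)) ^ n := by
  have ht : (1 - r⁻¹) / 2 ≤ 0 := by
    have := one_le_inv₀ hr₀ |>.mpr hr
    linarith
  have hr_inv : 0 < r⁻¹ := inv_pos.mpr hr₀
  exact (measure_le_le_exp_mul_mgf (X := id) _ ht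
    (integrable_exp_mul_chiSq n (by linarith))).trans_eq (exp_mul_mgf_chiSq n hr₀)

lemma one_sub_le_exp_neg_sub_sq_div_two {v : ℝ} (hv : 0 ≤ v) : 1 - v ≤ exp (-v - v ^ 2 / 2) := by
  rcases lt_or_ge v 1 with hv1 | hv1
  · have hlog : v + v ^ 2 / 2 ≤ -log (1 - v) := by
      have := sum_le_hasSum (Finset.range 2) (fun i _ => by positivity)
        (hasSum_pow_div_log_of_abs_lt_one (by rwa [abs_of_nonneg hv]))
      norm_num [Finset.sum_range_succ] at this
      linarith
    calc 1 - v = exp (log (1 - v)) := (exp_log (by linarith)).symm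
      _ ≤ exp (-v - v ^ 2 / 2) := exp_le_exp.mpr (by linarith)
  · exact (sub_nonpos.mpr hv1).trans (exp_pos _).le

lemma sqrt_one_add_mul_exp_le {u : ℝ} (hu : 0 ≤ u) :
    √(1 + 2 * u + 2 * u ^ 2) * exp ((1 - (1 + 2 * u + 2 * u ^ 2)) / 2) ≤ exp (-u ^ 2) := by
  have hsqrt : √(1 + 2 * u + 2 * u ^ 2) ≤ exp u := by
    rw [sqrt_le_iff, ← exp_nat_mul]
    refine ⟨(exp_pos u).le, ?_⟩
    have := quadratic_le_exp_of_nonneg (mul_nonneg zero_le_two hu)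
    push_cast
    linarith
  calc _ ≤ exp u * exp ((1 - (1 + 2 * u + 2 * u ^ 2)) / 2) := by gcongr
    _ = exp (-u ^ 2) := by rw [← exp_add]; ring_nf

lemma sqrt_one_sub_mul_exp_le {u : ℝ} (hu : 0 ≤ u) :
    √(1 - 2 * u) * exp ((1 - (1 - 2 * u)) / 2) ≤ exp (-u ^ 2) := by
  have hsqrt : √(1 - 2 * u) ≤ exp (-u - u ^ 2) := by
    rw [sqrt_le_iff, ← exp_nat_mul]
    refine ⟨(exp_pos _).le, ?_⟩
    have := one_sub_le_exp_neg_sub_sq_div_two (mul_nonneg zero_le_two hu)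
    convert this using 2
    push_cast
    ring
  calc _ ≤ exp (-u - u ^ 2) * exp ((1 - (1 - 2 * u)) / 2) := by gcongr
    _ = exp (-u ^ 2) := by rw [← exp_add]; ring_nf

lemma sqrt_mul_eq_mul_sqrt_div {c : ℝ} (hc : 0 ≤ c) (x : ℝ) : √(c * x) = c * √(x / c) := by
  rcases hc.eq_or_lt with rfl | hc
  · simp
  rw [show c * x = c ^ 2 * (x / c) by field_simp, sqrt_mul (sq_nonneg c), sqrt_sq hc.le]

lemma chiSq_Ioi_le_exp_neg {n : ℕ} (hn : 0 < n) {x : ℝ} (hx : 0 ≤ x) :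
    chiSq n (Set.Ioi (n + 2 * √(n * x) + 2 * x)) ≤ ENNReal.ofReal (exp (-x)) := by
  have hn' : (0 : ℝ) < n := Nat.cast_pos.mpr hn
  set u := √(x / n)
  have hu : 0 ≤ u := sqrt_nonneg _
  have hx_eq : x = n * u ^ 2 := by rw [sq_sqrt (by positivity)]; field_simp
  have hsqrt : √(n * x) = n * u := sqrt_mul_eq_mul_sqrt_div hn'.le x
  rw [← ofReal_measureReal]
  refine ENNReal.ofReal_le_ofReal ?_
  calc (chiSq n).real (Set.Ioi (n + 2 * √(n * x) + 2 * x))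
      ≤ (chiSq n).real (Set.Ici (n * (1 + 2 * u + 2 * u ^ 2))) := by
        refine measureReal_mono fun y (hy : _ < y) => show _ ≤ y by
          rw [hsqrt] at hy
          linarith
    _ ≤ (√(1 + 2 * u + 2 * u ^ 2) * exp ((1 - (1 + 2 * u + 2 * u ^ 2)) / 2)) ^ n :=
        measureReal_chiSq_Ici_le_pow n (by nlinarith)
    _ ≤ exp (-u ^ 2) ^ n := pow_le_pow_left₀ (by positivity) (sqrt_one_add_mul_exp_le hu) n
    _ = exp (-x) := by rw [← exp_nat_mul, hx_eq]; ring_nf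

lemma chiSq_Iic_le_exp_neg {n : ℕ} (hn : 0 < n) {x : ℝ} (hx : 0 ≤ x) :
    chiSq n (Set.Iic (n - 2 * √(n * x))) ≤ ENNReal.ofReal (exp (-x)) := by
  have hn' : (0 : ℝ) < n := Nat.cast_pos.mpr hn
  set u := √(x / n)
  have hu : 0 ≤ u := sqrt_nonneg _
  have hx_eq : x = n * u ^ 2 := by rw [sq_sqrt (by positivity)]; field_simp
  have hsqrt : √(n * x) = n * u := sqrt_mul_eq_mul_sqrt_div hn'.le x
  rcases lt_or_ge (2 * u) 1 with hu1 | hu1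
  · rw [← ofReal_measureReal]
    refine ENNReal.ofReal_le_ofReal ?_
    calc (chiSq n).real (Set.Iic (n - 2 * √(n * x)))
        = (chiSq n).real (Set.Iic (n * (1 - 2 * u))) := by
          rw [hsqrt, mul_sub, mul_one, mul_left_comm]
      _ ≤ (√(1 - 2 * u) * exp ((1 - (1 - 2 * u)) / 2)) ^ n :=
          measureReal_chiSq_Iic_le_pow n (by linarith) (by linarith)
      _ ≤ exp (-u ^ 2) ^ n := pow_le_pow_left₀ (by positivity) (sqrt_one_sub_mul_exp_le hu) n
      _ = exp (-x) := by rw [← exp_nat_mul, hx_eq]; ring_nf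
  · calc chiSq n (Set.Iic (n - 2 * √(n * x)))
        ≤ chiSq n {y | ¬0 < y} := measure_mono fun y (hy : y ≤ _) => show ¬0 < y by
          rw [hsqrt] at hy
          nlinarith
      _ = 0 := ae_iff.mp (ae_pos_chiSq hn)
      _ ≤ ENNReal.ofReal (exp (-x)) := bot_le

lemma div_le_div_div_of_mul_lt_of_le_mul {p q u v α β : ℝ} (hp : 0 < p) (hq : 0 < q)
    (hu : 0 ≤ u) (hv : 0 < v) (huα : p * α < u) (hvβ : v ≤ q * β) :
    α / β ≤ (u / p) / (v / q) := by
  have hβ : 0 < β := pos_of_mul_pos_right (hv.trans_le hvβ) hq.le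
  rcases le_or_gt α 0 with hα | hα
  · exact (div_nonpos_of_nonpos_of_nonneg hα hβ.le).trans (by positivity)
  · exact div_le_div₀ (by positivity) ((le_div_iff₀' hp).mpr huα.le) (by positivity)
      ((div_le_iff₀' hq).mpr hvβ)

open MeasureTheory in
theorem stmt_19_general {Ω : Type*} [MeasureSpace Ω]
    (na nb : ℕ) (hna : 0 < na) (hnb : 0 < nb)
    (U V : Ω → ℝ) (hU : Measure.map U ℙ = chiSq na) (hV : Measure.map V ℙ = chiSq nb)
    (a b : ℝ) (ha : 0 < a) (hb : 0 < b) :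
    ℙ ({ω | V ω ≤ nb + 2 * Real.sqrt (nb * b) + 2 * b ∧
          (na : ℝ) - 2 * Real.sqrt (na * a) < U ω}ᶜ) ≤
        ENNReal.ofReal (Real.exp (-a) + Real.exp (-b)) ∧
      ∀ᵐ ω ∂ℙ, (V ω ≤ nb + 2 * Real.sqrt (nb * b) + 2 * b ∧
          (na : ℝ) - 2 * Real.sqrt (na * a) < U ω) →
        (1 - 2 * Real.sqrt (a / na)) / (1 + 2 * Real.sqrt (b / nb) + 2 * b / nb) ≤
          (U ω / na) / (V ω / nb) := by
  have hUm : AEMeasurable U ℙ := .of_map_ne_zero (hU ▸ IsProbabilityMeasure.ne_zero _)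
  have hVm : AEMeasurable V ℙ := .of_map_ne_zero (hV ▸ IsProbabilityMeasure.ne_zero _)
  have hna' : (0 : ℝ) < na := Nat.cast_pos.mpr hna
  have hnb' : (0 : ℝ) < nb := Nat.cast_pos.mpr hnb
  constructor
  · calc ℙ {ω | V ω ≤ nb + 2 * √(nb * b) + 2 * b ∧ (na : ℝ) - 2 * √(na * a) < U ω}ᶜ
        ≤ ℙ (V ⁻¹' Set.Ioi (nb + 2 * √(nb * b) + 2 * b) ∪ U ⁻¹' Set.Iic (na - 2 * √(na * a))) :=
          measure_mono fun ω hω => (not_and_or.mp hω).imp not_le.mp not_lt.mp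
      _ ≤ chiSq nb (Set.Ioi (nb + 2 * √(nb * b) + 2 * b)) +
            chiSq na (Set.Iic (na - 2 * √(na * a))) := by
          rw [← hU, ← hV, Measure.map_apply_of_aemeasurable hVm measurableSet_Ioi,
            Measure.map_apply_of_aemeasurable hUm measurableSet_Iic]
          exact measure_union_le _ _
      _ ≤ ENNReal.ofReal (exp (-b)) + ENNReal.ofReal (exp (-a)) :=
          add_le_add (chiSq_Ioi_le_exp_neg hnb hb.le) (chiSq_Iic_le_exp_neg hna ha.le)
      _ = ENNReal.ofReal (exp (-a) + exp (-b)) := by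
          rw [ENNReal.ofReal_add (exp_pos _).le (exp_pos _).le, add_comm]
  · filter_upwards [ae_of_ae_map hUm (hU ▸ ae_pos_chiSq hna),
      ae_of_ae_map hVm (hV ▸ ae_pos_chiSq hnb)] with ω hUω hVω ⟨hVω_le, hUω_gt⟩
    refine div_le_div_div_of_mul_lt_of_le_mul hna' hnb' hUω.le hVω ?_ ?_
    · rwa [sqrt_mul_eq_mul_sqrt_div hna'.le, ← mul_assoc, mul_comm 2 (na : ℝ), mul_assoc,
        ← mul_one_sub] at hUω_gt
    · rw [sqrt_mul_eq_mul_sqrt_div hnb'.le] at hVω_le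
      convert hVω_le using 1
      field_simp

open MeasureTheory in
/-- For independent `U ~ χ²_{n_a}` and `V ~ χ²_{n_b}` and `a, b > 0`, the event
`T = {V ≤ n_b + 2√(n_b b) + 2b, U > n_a − 2√(n_a a)}` has
`P(Tᶜ) ≤ exp(−a) + exp(−b)`, and (almost surely) on `T` the ratio `(U/n_a)/(V/n_b)` is at
least `(1 − 2√(a/n_a))/(1 + 2√(b/n_b) + 2b/n_b)`. -/
theorem stmt_19 {Ω : Type*} [MeasureSpace Ω] [IsProbabilityMeasure (ℙ : Measure Ω)]
    (na nb : ℕ) (hna : 0 < na) (hnb : 0 < nb)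
    (U V : Ω → ℝ) (hU : Measure.map U ℙ = chiSq na) (hV : Measure.map V ℙ = chiSq nb)
    (hUV : IndepFun U V ℙ)
    (a b : ℝ) (ha : 0 < a) (hb : 0 < b) :
    ℙ ({ω | V ω ≤ nb + 2 * Real.sqrt (nb * b) + 2 * b ∧
          (na : ℝ) - 2 * Real.sqrt (na * a) < U ω}ᶜ) ≤
        ENNReal.ofReal (Real.exp (-a) + Real.exp (-b)) ∧
      ∀ᵐ ω ∂ℙ, (V ω ≤ nb + 2 * Real.sqrt (nb * b) + 2 * b ∧
          (na : ℝ) - 2 * Real.sqrt (na * a) < U ω) →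
        (1 - 2 * Real.sqrt (a / na)) / (1 + 2 * Real.sqrt (b / nb) + 2 * b / nb) ≤
          (U ω / na) / (V ω / nb) :=
  stmt_19_general na nb hna hnb U V hU hV a b ha hb
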